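/- There does not exist a C¹ function f : ℝⁿ → ℝ with nowhere-vanishing gradient that is a weak solution of div(∇f/|∇f|) = g for a continuous function g ≥ 0 satisfying lim inf_{r → ∞} inf_{x ∈ B(x₀, r)} g(x) > 0 for some x₀ ∈ ℝⁿ. -/

import Mathlib

/-!
Normalizing the gradient gives a vector field `X = ∇f/|∇f|` with `‖X‖ ≤ 1` whose weak
divergence is `g`, and the liminf condition makes `g ≥ c > 0` everywhere. Testing the equation
against the Lipschitz cutoff `ψ` that is `1` on `B(x₀, R)`, vanishes off `B(x₀, 2R)` and has slope
`1/R` gives `c |B_R| ≤ ∫ g ψ = -∫ ⟨X, ∇ψ⟩ ≤ |B_{2R}| / R = 2ⁿ |B_R| / R`, i.e. `c ≤ 2ⁿ / R`,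
which fails for large `R`.
-/

open MeasureTheory Metric Filter RealInnerProductSpace

open scoped NNReal

section Cutoff

variable {α : Type*} [PseudoMetricSpace α] {x₀ x : α} {R : ℝ}

noncomputable def cutoff (x₀ : α) (R : ℝ) (x : α) : ℝ :=
  max 0 (min 1 (2 - dist x x₀ / R))

lemma cutoff_nonneg : 0 ≤ cutoff x₀ R x := le_max_left _ _

lemma cutoff_eq_one_of_mem_closedBall (hR : 0 < R) (hx : x ∈ closedBall x₀ R) :
    cutoff x₀ R x = 1 := by
  have : 1 ≤ 2 - dist x x₀ / R := by
    have := (div_le_one hR).2 (mem_closedBall.1 hx)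
    linarith
  simp [cutoff, min_eq_left this]

lemma support_cutoff_subset (hR : 0 < R) :
    Function.support (cutoff x₀ R) ⊆ closedBall x₀ (2 * R) := by
  intro x hx
  by_contra hfar
  have : 2 - dist x x₀ / R ≤ 0 := by
    rw [sub_nonpos, le_div_iff₀ hR]
    linarith [not_le.1 (mt mem_closedBall.2 hfar)]
  exact hx (max_eq_left ((min_le_right _ _).trans this))

lemma tsupport_cutoff_subset (hR : 0 < R) : tsupport (cutoff x₀ R) ⊆ closedBall x₀ (2 * R) :=
  closure_minimal (support_cutoff_subset hR) isClosed_closedBall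

lemma hasCompactSupport_cutoff [ProperSpace α] (hR : 0 < R) : HasCompactSupport (cutoff x₀ R) :=
  (isCompact_closedBall x₀ (2 * R)).of_isClosed_subset (isClosed_tsupport _)
    (tsupport_cutoff_subset hR)

lemma lipschitzWith_cutoff (hR : 0 < R) : LipschitzWith (Real.toNNReal R⁻¹) (cutoff x₀ R) := by
  have ramp : LipschitzWith (Real.toNNReal R⁻¹) fun x => 2 - dist x x₀ / R := by
    refine LipschitzWith.of_dist_le_mul fun x y => ?_
    rw [Real.coe_toNNReal _ (inv_nonneg.2 hR.le), Real.dist_eq]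
    calc |2 - dist x x₀ / R - (2 - dist y x₀ / R)| = |dist y x₀ - dist x x₀| / R := by
          rw [← abs_of_pos hR, ← abs_div, abs_of_pos hR]; ring_nf
      _ ≤ dist y x / R := div_le_div_of_nonneg_right (abs_dist_sub_le y x x₀) hR.le
      _ = R⁻¹ * dist x y := by rw [dist_comm, div_eq_inv_mul]
  exact (ramp.const_min 1).const_max 0

end Cutoff

lemma le_of_lt_liminf_sInf_image_ball {α : Type*} [PseudoMetricSpace α] {g : α → ℝ} {x₀ : α}
    {a : ℝ} (hg : BddBelow (Set.range g))
    (ha : a < liminf (fun r : ℝ => sInf (g '' ball x₀ r)) atTop) (x : α) : a ≤ g x := by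
  obtain ⟨b, hb⟩ := hg
  have hb_inf : ∀ᶠ r in atTop, b ≤ sInf (g '' ball x₀ r) := by
    filter_upwards [eventually_gt_atTop 0] with r hr
    exact le_csInf ⟨g x₀, x₀, mem_ball_self hr, rfl⟩ fun _ ⟨y, _, hy⟩ => hy ▸ hb ⟨y, rfl⟩
  have hlt : ∀ᶠ r in atTop, a < sInf (g '' ball x₀ r) :=
    eventually_lt_of_lt_liminf ha (isBoundedUnder_of_eventually_ge hb_inf)
  obtain ⟨r, har, hxr⟩ := (hlt.and (eventually_gt_atTop (dist x x₀))).exists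
  have hinf_le : sInf (g '' ball x₀ r) ≤ g x :=
    csInf_le ⟨b, fun _ ⟨y, _, hy⟩ => hy ▸ hb ⟨y, rfl⟩⟩ ⟨x, mem_ball.2 hxr, rfl⟩
  exact (har.trans_le hinf_le).le

lemma norm_inv_norm_smul_le_one {E : Type*} [NormedAddCommGroup E] [NormedSpace ℝ E] (v : E) :
    ‖‖v‖⁻¹ • v‖ ≤ 1 := by
  rcases eq_or_ne v 0 with rfl | hv
  · simp
  · exact (norm_smul_inv_norm hv).le

section WeakDivergence

variable {E : Type*} [NormedAddCommGroup E] [InnerProductSpace ℝ E] {ψ : E → ℝ} {x : E}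

lemma norm_gradient_le_of_lipschitz [CompleteSpace E] {K : ℝ≥0} (hψ : LipschitzWith K ψ) :
    ‖gradient ψ x‖ ≤ K := by
  rw [gradient, LinearIsometryEquiv.norm_map]
  exact norm_fderiv_le_of_lipschitz ℝ hψ

lemma gradient_eq_zero_of_notMem_tsupport [CompleteSpace E] (hx : x ∉ tsupport ψ) :
    gradient ψ x = 0 := by
  rw [gradient, Function.notMem_support.1 fun h => hx (support_fderiv_subset ℝ h), map_zero]

variable [MeasurableSpace E]

def HasWeakDivergence [CompleteSpace E] (μ : Measure E) (X : E → E) (g : E → ℝ) : Prop :=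
  ∀ ψ : E → ℝ, (∃ L, LipschitzWith L ψ) → HasCompactSupport ψ →
    ∫ x, ⟪X x, gradient ψ x⟫ ∂μ = -∫ x, g x * ψ x ∂μ

lemma norm_integral_inner_gradient_le [CompleteSpace E] (μ : Measure E) {X : E → E} {K : ℝ≥0}
    {s : Set E} (hX : ∀ x, ‖X x‖ ≤ 1) (hψ : LipschitzWith K ψ) (hs : tsupport ψ ⊆ s)
    (hμs : μ s < ⊤) :
    ‖∫ x, ⟪X x, gradient ψ x⟫ ∂μ‖ ≤ K * μ.real s := by
  rw [← setIntegral_eq_integral_of_forall_compl_eq_zero fun x hx => by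
    rw [gradient_eq_zero_of_notMem_tsupport fun h => hx (hs h), inner_zero_right]]
  refine norm_setIntegral_le_of_norm_le_const hμs fun x _ => ?_
  calc ‖⟪X x, gradient ψ x⟫‖ ≤ ‖X x‖ * ‖gradient ψ x‖ := norm_inner_le_norm _ _
    _ ≤ 1 * K := mul_le_mul (hX x) (norm_gradient_le_of_lipschitz hψ) (norm_nonneg _) zero_le_one
    _ = K := one_mul _

lemma HasWeakDivergence.mul_measureReal_closedBall_le [ProperSpace E] [BorelSpace E]
    {μ : Measure E} [IsFiniteMeasureOnCompacts μ] {X : E → E} {g : E → ℝ} {c R : ℝ}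
    (hdiv : HasWeakDivergence μ X g) (hX : ∀ x, ‖X x‖ ≤ 1) (hg : Continuous g) (hc : 0 ≤ c)
    (hcg : ∀ x, c ≤ g x) (x₀ : E) (hR : 0 < R) :
    c * μ.real (closedBall x₀ R) ≤ R⁻¹ * μ.real (closedBall x₀ (2 * R)) := by
  set ψ := cutoff x₀ R
  have hψ : LipschitzWith (Real.toNNReal R⁻¹) ψ := lipschitzWith_cutoff hR
  have hψ_one : ∀ x ∈ closedBall x₀ R, ψ x = 1 := fun _ => cutoff_eq_one_of_mem_closedBall hR
  have hgψ : Integrable (fun x => g x * ψ x) μ :=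
    (hg.mul hψ.continuous).integrable_of_hasCompactSupport (hasCompactSupport_cutoff hR).mul_left
  calc c * μ.real (closedBall x₀ R)
      ≤ ∫ x in closedBall x₀ R, g x * ψ x ∂μ :=
        setIntegral_ge_of_const_le_real measurableSet_closedBall measure_closedBall_lt_top.ne
          (fun x hx => by rw [hψ_one x hx, mul_one]; exact hcg x)
          hgψ.integrableOn
    _ ≤ ∫ x, g x * ψ x ∂μ :=
        setIntegral_le_integral hgψ
          (Eventually.of_forall fun x => mul_nonneg (hc.trans (hcg x)) cutoff_nonneg)
    _ = -∫ x, ⟪X x, gradient ψ x⟫ ∂μ := by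
        rw [hdiv ψ ⟨_, hψ⟩ (hasCompactSupport_cutoff hR), neg_neg]
    _ ≤ ‖∫ x, ⟪X x, gradient ψ x⟫ ∂μ‖ := neg_le_abs _
    _ ≤ R⁻¹ * μ.real (closedBall x₀ (2 * R)) := by
        simpa [Real.coe_toNNReal _ (inv_nonneg.2 hR.le)] using
          norm_integral_inner_gradient_le μ hX hψ (tsupport_cutoff_subset hR)
            measure_closedBall_lt_top

theorem not_hasWeakDivergence_of_norm_le_one [FiniteDimensional ℝ E] [BorelSpace E]
    (μ : Measure E) [μ.IsAddHaarMeasure] {X : E → E} {g : E → ℝ} {c : ℝ}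
    (hX : ∀ x, ‖X x‖ ≤ 1) (hg : Continuous g) (hc : 0 < c) (hcg : ∀ x, c ≤ g x) :
    ¬ HasWeakDivergence μ X g := by
  intro hdiv
  set d := Module.finrank ℝ E
  set R := 2 ^ (d + 1) / c
  have hR : 0 < R := by positivity
  have hV : 0 < μ.real (ball (0 : E) 1) :=
    ENNReal.toReal_pos (measure_ball_pos μ 0 one_pos).ne' measure_ball_lt_top.ne
  have key := hdiv.mul_measureReal_closedBall_le hX hg hc.le hcg 0 hR
  rw [Measure.addHaar_real_closedBall μ _ hR.le,
    Measure.addHaar_real_closedBall μ _ (by positivity), mul_pow] at key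
  have hcR : c * R ≤ 2 ^ d := by
    refine le_of_mul_le_mul_right ?_ (mul_pos (pow_pos hR d) hV)
    calc c * R * (R ^ d * μ.real (ball 0 1)) = R * (c * (R ^ d * μ.real (ball 0 1))) := by ring
      _ ≤ R * (R⁻¹ * (2 ^ d * R ^ d * μ.real (ball 0 1))) := mul_le_mul_of_nonneg_left key hR.le
      _ = 2 ^ d * (R ^ d * μ.real (ball 0 1)) := by field_simp
  rw [show c * R = 2 ^ (d + 1) by simp only [R]; field_simp, pow_succ] at hcR
  linarith [pow_pos (two_pos : (0 : ℝ) < 2) d]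

end WeakDivergence

/-- There is no entire C¹ function with nowhere-vanishing gradient solving
`div(∇f/|∇f|) = g` weakly for a nonnegative continuous `g` whose infima over
large balls stay bounded away from `0`. -/
theorem no_one_harmonic_with_positive_tension (n : ℕ) :
    ¬ ∃ (f g : EuclideanSpace ℝ (Fin n) → ℝ) (x₀ : EuclideanSpace ℝ (Fin n)),
      ContDiff ℝ 1 f ∧ (∀ x, gradient f x ≠ 0) ∧
      Continuous g ∧ (∀ x, 0 ≤ g x) ∧
      (∀ ψ : EuclideanSpace ℝ (Fin n) → ℝ,
        (∃ L, LipschitzWith L ψ) → HasCompactSupport ψ →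
        ∫ x, ⟪(‖gradient f x‖)⁻¹ • gradient f x, gradient ψ x⟫ =
          - ∫ x, g x * ψ x) ∧
      0 < liminf (fun r : ℝ => sInf (g '' ball x₀ r)) atTop := by
  rintro ⟨f, g, x₀, -, -, hg, hg0, hdiv, hlim⟩
  have hg_bdd : BddBelow (Set.range g) := ⟨0, by rintro _ ⟨x, rfl⟩; exact hg0 x⟩
  exact not_hasWeakDivergence_of_norm_le_one volume
    (fun x => norm_inv_norm_smul_le_one (gradient f x)) hg (half_pos hlim)
    (le_of_lt_liminf_sInf_image_ball hg_bdd (half_lt_self hlim)) hdiv
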